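/- arXiv:1904.06364 — 5 statements merged into one kernel-verified Lean document; each statement's English description precedes it below -/
import Mathlib

section
/- Let X, Y be commuting self-adjoint operators as above with ρ a density operator such that tr(ρQ_y) > 0 for all eigenvalues y of Y. Define the effect-valued conditional expectation E[X|Y] = Σ_y (Σ_x x p(x|y)) Q_y where p(x|y) = tr(ρP_xQ_y)/tr(ρQ_y). Then E[X|Y] is self-adjoint, commutes with Y, and satisfies the tower property tr(ρ E[X|Y] f(Y)) = tr(ρ X f(Y)) for every function f on the spectrum of Y. -/
open Matrix ComplexOrder BigOperators

section aux

variable {n : ℕ} {ι : Type*} [Fintype ι] [DecidableEq ι]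

lemma diag_mul (Q : ι → Matrix (Fin n) (Fin n) ℂ)
    (hQorth : ∀ j j', Q j * Q j' = if j = j' then Q j else 0)
    (c : ι → ℂ) (j : ι) :
    (∑ k, c k • Q k) * Q j = c j • Q j := by
  rw [Finset.sum_mul, Finset.sum_eq_single j]
  · rw [smul_mul_assoc, hQorth]; simp
  · intro k _ hk; rw [smul_mul_assoc, hQorth]; simp [hk]
  · simp

lemma mul_diag (Q : ι → Matrix (Fin n) (Fin n) ℂ)
    (hQorth : ∀ j j', Q j * Q j' = if j = j' then Q j else 0)
    (c : ι → ℂ) (j : ι) :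
    Q j * (∑ k, c k • Q k) = c j • Q j := by
  rw [Matrix.mul_sum, Finset.sum_eq_single j]
  · rw [mul_smul_comm, hQorth]; simp
  · intro k _ hk; rw [mul_smul_comm, hQorth]; simp [Ne.symm hk]
  · simp

lemma comm_proj (A : Matrix (Fin n) (Fin n) ℂ)
    (y : ι → ℝ) (hyinj : Function.Injective y)
    (Q : ι → Matrix (Fin n) (Fin n) ℂ)
    (hQorth : ∀ j j', Q j * Q j' = if j = j' then Q j else 0)
    (hQsum : ∑ j, Q j = 1)
    (h : A * (∑ j, (y j : ℂ) • Q j) = (∑ j, (y j : ℂ) • Q j) * A)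
    (j : ι) : A * Q j = Q j * A := by
  set S := ∑ j, (y j : ℂ) • Q j with hS
  have off : ∀ k k', k ≠ k' → Q k * A * Q k' = 0 := by
    intro k k' hkk'
    have h1 : Q k * (A * S) * Q k' = Q k * (S * A) * Q k' := by rw [h]
    have e1 : Q k * (A * S) * Q k' = (y k' : ℂ) • (Q k * A * Q k') := by
      rw [mul_assoc (Q k) (A * S), mul_assoc A S, diag_mul Q hQorth, mul_smul_comm,
        mul_smul_comm, ← mul_assoc]
    have e2 : Q k * (S * A) * Q k' = (y k : ℂ) • (Q k * A * Q k') := by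
      rw [← mul_assoc (Q k) S A, mul_diag Q hQorth, smul_mul_assoc, smul_mul_assoc]
    rw [e1, e2] at h1
    have hy : (y k' : ℂ) - (y k : ℂ) ≠ 0 := by
      intro hc
      apply hkk'
      apply hyinj
      exact_mod_cast (sub_eq_zero.mp hc).symm
    have := sub_eq_zero.mpr h1
    rw [← sub_smul] at this
    rcases smul_eq_zero.mp this with h' | h'
    · exact absurd h' hy
    · exact h'
  have left : A * Q j = Q j * (A * Q j) := by
    conv_lhs => rw [show A * Q j = 1 * (A * Q j) by rw [one_mul], ← hQsum]
    rw [Finset.sum_mul, Finset.sum_eq_single j]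
    · intro k _ hk
      rw [← mul_assoc]; exact off k j hk
    · simp
  have right : Q j * A = Q j * (A * Q j) := by
    conv_lhs => rw [show Q j * A = Q j * A * 1 by rw [mul_one], ← hQsum]
    rw [Matrix.mul_sum, Finset.sum_eq_single j]
    · rw [mul_assoc]
    · intro k _ hk
      exact off j k (Ne.symm hk)
    · simp
  rw [left, right]

end aux
lemma trace_rho_smul_sum {n : ℕ} {κ : Type*} [Fintype κ]
    (ρ : Matrix (Fin n) (Fin n) ℂ) (a : κ → ℂ) (M : κ → Matrix (Fin n) (Fin n) ℂ) :
    (ρ * ∑ k, a k • M k).trace = ∑ k, a k * (ρ * M k).trace := by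
  simp [Matrix.mul_sum, mul_smul_comm, Matrix.trace_sum, Matrix.trace_smul, smul_eq_mul]

/-- The effect-valued conditional expectation
`E[X|Y] = Σ_y (Σ_x x p(x|y)) Q_y`, with `p(x|y) = tr(ρP_xQ_y)/tr(ρQ_y)`,
is self-adjoint, commutes with `Y`, and satisfies the tower property
`tr(ρ E[X|Y] f(Y)) = tr(ρ X f(Y))` for every function `f` on the spectrum
of `Y`. -/
theorem conditional_expectation_tower {n : ℕ} {ιX ιY : Type*}
    [Fintype ιX] [Fintype ιY] [DecidableEq ιX] [DecidableEq ιY]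
    (X Y ρ : Matrix (Fin n) (Fin n) ℂ)
    (hρ : ρ.PosSemidef) (hρtr : ρ.trace = 1)
    (hX : X.IsHermitian) (hY : Y.IsHermitian)
    (hXY : X * Y = Y * X)
    (x : ιX → ℝ) (hxinj : Function.Injective x)
    (P : ιX → Matrix (Fin n) (Fin n) ℂ)
    (hPherm : ∀ i, (P i).IsHermitian)
    (hPorth : ∀ i i', P i * P i' = if i = i' then P i else 0)
    (hPsum : ∑ i, P i = 1)
    (hXspec : X = ∑ i, (x i : ℂ) • P i)
    (y : ιY → ℝ) (hyinj : Function.Injective y)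
    (Q : ιY → Matrix (Fin n) (Fin n) ℂ)
    (hQherm : ∀ j, (Q j).IsHermitian)
    (hQorth : ∀ j j', Q j * Q j' = if j = j' then Q j else 0)
    (hQsum : ∑ j, Q j = 1)
    (hYspec : Y = ∑ j, (y j : ℂ) • Q j)
    (hpos : ∀ j, 0 < (ρ * Q j).trace)
    (E : Matrix (Fin n) (Fin n) ℂ)
    (hE : E = ∑ j, (∑ i, (x i : ℂ) *
      ((ρ * (P i * Q j)).trace / (ρ * Q j).trace)) • Q j) :
    E.IsHermitian ∧ Commute E Y ∧
    (∀ f : ιY → ℂ,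
      (ρ * E * (∑ j, f j • Q j)).trace = (ρ * X * (∑ j, f j • Q j)).trace) := by
  -- commutation of the projections
  have hYP : ∀ i, Y * P i = P i * Y := fun i =>
    comm_proj Y x hxinj P hPorth hPsum (by rw [← hXspec]; exact hXY.symm) i
  have hPQ : ∀ i j, P i * Q j = Q j * P i := fun i j =>
    comm_proj (P i) y hyinj Q hQorth hQsum (by rw [← hYspec]; exact (hYP i).symm) j
  have hPQherm : ∀ i j, (P i * Q j).IsHermitian := by
    intro i j
    unfold Matrix.IsHermitian
    rw [conjTranspose_mul, (hQherm j), (hPherm i), ← hPQ]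
  -- reality of traces against ρ
  have herm_trace : ∀ (M : Matrix (Fin n) (Fin n) ℂ), M.IsHermitian →
      star ((ρ * M).trace) = (ρ * M).trace := by
    intro M hM
    calc star ((ρ * M).trace) = ((ρ * M)ᴴ).trace := (trace_conjTranspose _).symm
      _ = (Mᴴ * ρᴴ).trace := by rw [conjTranspose_mul]
      _ = (M * ρ).trace := by rw [hM, hρ.1]
      _ = (ρ * M).trace := trace_mul_comm _ _
  set c : ιY → ℂ :=
    fun j => ∑ i, (x i : ℂ) * ((ρ * (P i * Q j)).trace / (ρ * Q j).trace) with hc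
  have hE' : E = ∑ j, c j • Q j := hE
  have hcreal : ∀ j, star (c j) = c j := by
    intro j
    simp only [hc]
    rw [star_sum]
    refine Finset.sum_congr rfl fun i _ => ?_
    rw [star_mul', star_div₀, herm_trace _ (hPQherm i j), herm_trace _ (hQherm j)]
    simp [Complex.conj_ofReal]
  have hEherm : E.IsHermitian := by
    unfold Matrix.IsHermitian
    rw [hE', conjTranspose_sum]
    refine Finset.sum_congr rfl fun j _ => ?_
    rw [conjTranspose_smul, hcreal, hQherm]
  refine ⟨hEherm, ?_, ?_⟩
  · show E * Y = Y * E
    rw [hE', hYspec]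
    rw [Matrix.mul_sum, Matrix.mul_sum]
    refine Finset.sum_congr rfl fun j _ => ?_
    rw [mul_smul_comm, mul_smul_comm, diag_mul Q hQorth, diag_mul Q hQorth,
      smul_smul, smul_smul, mul_comm]
  · intro f
    have sne : ∀ j, (ρ * Q j).trace ≠ 0 := fun j => (hpos j).ne'
    have hEF : E * (∑ j, f j • Q j) = ∑ j, (f j * c j) • Q j := by
      rw [hE', Matrix.mul_sum]
      refine Finset.sum_congr rfl fun j _ => ?_
      rw [mul_smul_comm, diag_mul Q hQorth, smul_smul]
    have hXF : X * (∑ j, f j • Q j) = ∑ j, f j • (X * Q j) := by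
      rw [Matrix.mul_sum]
      refine Finset.sum_congr rfl fun j _ => ?_
      rw [mul_smul_comm]
    have hXQ : ∀ j, (ρ * (X * Q j)).trace = ∑ i, (x i : ℂ) * (ρ * (P i * Q j)).trace := by
      intro j
      have : X * Q j = ∑ i, (x i : ℂ) • (P i * Q j) := by
        rw [hXspec, Finset.sum_mul]
        exact Finset.sum_congr rfl fun i _ => smul_mul_assoc _ _ _
      rw [this, trace_rho_smul_sum]
    rw [mul_assoc, mul_assoc, hEF, hXF, trace_rho_smul_sum, trace_rho_smul_sum]
    refine Finset.sum_congr rfl fun j _ => ?_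
    rw [hXQ, mul_assoc, hc]
    congr 1
    rw [Finset.sum_mul]
    refine Finset.sum_congr rfl fun i _ => ?_
    rw [mul_assoc, div_mul_cancel₀ _ (sne j)]
end

section
/- (Non-demolition property.) Under the same hypotheses, with j_t(X) = U(t,0)* (X ⊗ I) U(t,0) for X an operator on the system h, one has [j_t(X), Y_k(s)] = 0 whenever t ≥ s. -/
open Matrix Kronecker BigOperators

/-- (Non-demolition property.) With `j_t(X) = U(t,0)* (X ⊗ I) U(t,0)`, the
evolved system observable commutes with every output `Y_k(s)` for `s ≤ t`. -/
theorem nondemolition {n f T : ℕ} {K : Type*} [Fintype K]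
    (U : ℕ → ℕ → Matrix (Fin n × Fin f) (Fin n × Fin f) ℂ)
    (hUuni : ∀ s t, s ≤ t → t ≤ T → U t s ∈ Matrix.unitaryGroup (Fin n × Fin f) ℂ)
    (hUid : ∀ t, U t t = 1)
    (hflow : ∀ t₁ t₂ t₃, t₁ ≤ t₂ → t₂ ≤ t₃ → t₃ ≤ T →
      U t₃ t₂ * U t₂ t₁ = U t₃ t₁)
    (Z : K → ℕ → Matrix (Fin f) (Fin f) ℂ)
    (hZherm : ∀ k t, (Z k t).IsHermitian)
    (hZcomm : ∀ j k t s, Commute (Z j t) (Z k s))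
    (hUZ : ∀ k u s t, u ≤ s → s ≤ t → t ≤ T →
      Commute (U t s) ((1 : Matrix (Fin n) (Fin n) ℂ) ⊗ₖ Z k u))
    (Y : K → ℕ → Matrix (Fin n × Fin f) (Fin n × Fin f) ℂ)
    (hY : ∀ k t, Y k t =
      (U t 0)ᴴ * ((1 : Matrix (Fin n) (Fin n) ℂ) ⊗ₖ Z k t) * U t 0) :
    ∀ (X : Matrix (Fin n) (Fin n) ℂ) k s t, s ≤ t → t ≤ T →
      Commute ((U t 0)ᴴ * (X ⊗ₖ (1 : Matrix (Fin f) (Fin f) ℂ)) * U t 0)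
        (Y k s) := by
  intro X k s t hst htT
  have hV := hUuni 0 t (Nat.zero_le _) htT
  have hVl : (U t 0)ᴴ * U t 0 = 1 := by
    have := (Matrix.mem_unitaryGroup_iff'.mp hV); simpa [Matrix.star_eq_conjTranspose] using this
  have hVr : U t 0 * (U t 0)ᴴ = 1 := by
    have := (Matrix.mem_unitaryGroup_iff.mp hV); simpa [Matrix.star_eq_conjTranspose] using this
  have hWl : (U t s)ᴴ * U t s = 1 := by
    have := (Matrix.mem_unitaryGroup_iff'.mp (hUuni s t hst htT))
    simpa [Matrix.star_eq_conjTranspose] using this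
  have hsplit : U t 0 = U t s * U s 0 := (hflow 0 s t (Nat.zero_le _) hst htT).symm
  set B := (1 : Matrix (Fin n) (Fin n) ℂ) ⊗ₖ Z k s with hB
  have hcomm : U t s * B = B * U t s := hUZ k s s t le_rfl hst htT
  -- rewrite Y k s as (U t 0)ᴴ * B * (U t 0)
  have hYts : Y k s = (U t 0)ᴴ * B * U t 0 := by
    rw [hY, hsplit, Matrix.conjTranspose_mul]
    have h1 : (U t s)ᴴ * B * U t s = B := by
      calc (U t s)ᴴ * B * U t s = (U t s)ᴴ * (B * U t s) := by noncomm_ring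
        _ = (U t s)ᴴ * (U t s * B) := by rw [hcomm]
        _ = ((U t s)ᴴ * U t s) * B := by noncomm_ring
        _ = B := by rw [hWl, one_mul]
    calc (U s 0)ᴴ * B * U s 0
        = (U s 0)ᴴ * ((U t s)ᴴ * B * U t s) * U s 0 := by rw [h1]
      _ = (U s 0)ᴴ * (U t s)ᴴ * B * (U t s * U s 0) := by noncomm_ring
  rw [hYts]
  have hAB : (X ⊗ₖ (1 : Matrix (Fin f) (Fin f) ℂ)) * B
      = B * (X ⊗ₖ (1 : Matrix (Fin f) (Fin f) ℂ)) := by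
    rw [hB, ← Matrix.mul_kronecker_mul, ← Matrix.mul_kronecker_mul]
    simp
  show _ = _
  calc ((U t 0)ᴴ * (X ⊗ₖ 1) * U t 0) * ((U t 0)ᴴ * B * U t 0)
      = (U t 0)ᴴ * (X ⊗ₖ 1) * (U t 0 * (U t 0)ᴴ) * B * U t 0 := by noncomm_ring
    _ = (U t 0)ᴴ * ((X ⊗ₖ 1) * B) * U t 0 := by rw [hVr]; noncomm_ring
    _ = (U t 0)ᴴ * (B * (X ⊗ₖ 1)) * U t 0 := by rw [hAB]
    _ = (U t 0)ᴴ * B * (U t 0 * (U t 0)ᴴ) * (X ⊗ₖ 1) * U t 0 := by rw [hVr]; noncomm_ring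
    _ = ((U t 0)ᴴ * B * U t 0) * ((U t 0)ᴴ * (X ⊗ₖ 1) * U t 0) := by noncomm_ring
end

section
/- (Bouten–van Handel reference probability theorem, finite-dimensional version.) Let E[·] = tr(ρ·) be a faithful state on the algebra A of all operators on a finite-dimensional Hilbert space, let Z be a commutative von Neumann subalgebra, U a unitary, and Y = U*ZU. Suppose F belongs to the commutant Z′ and E[U*XU] = E[F*XF] for every X ∈ Z′. Then for every X ∈ Z′ with σ(I) invertible, E[U*XU | Y] = σ(I)^{-1} σ(X), where σ(X) = U* E[F*XF | Z] U. -/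
/-!
For `X` in the commutant `Z'` and `W ∈ Z`, the hypothesis on `F` gives
`tr(ρ · U*XU · U*WU) = tr(ρ · E[F*XF|Z] · W)`; for `X = 1` this says that
`tr(ρ · U*WU) = tr(ρ K W)` with `K = E[F*F|Z]`. Since `K⁻¹ ∈ Z`, the element
`U*(K⁻¹ E[F*XF|Z])U = σ(I)⁻¹ σ(X)` of `Y` therefore has the same `ρ`-pairings with `Y` as `U*XU`,
and a faithful state distinguishes elements of a *-subalgebra by these pairings.
-/

open Matrix ComplexOrder

namespace Matrix

variable {𝕜 n : Type*} [Fintype n] [DecidableEq n]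

lemma inv_mem_subalgebra [Field 𝕜] (S : Subalgebra 𝕜 (Matrix n n 𝕜)) {a : Matrix n n 𝕜}
    (ha : a ∈ S) : a⁻¹ ∈ S := by
  -- For singular `a` this is `0 ∈ S`, since then `a⁻¹ = 0`.
  by_cases hu : IsUnit a
  · have : IsArtinianRing S := IsArtinianRing.of_finite 𝕜 S
    have hreg : (⟨a, ha⟩ : S) ∈ nonZeroDivisors S :=
      comap_nonZeroDivisors_le_of_injective (f := S.val) Subtype.val_injective
        hu.mem_nonZeroDivisors
    obtain ⟨c, hc⟩ := (IsArtinianRing.isUnit_of_mem_nonZeroDivisors hreg).exists_right_inv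
    rw [inv_eq_right_inv congr(Subtype.val $hc)]
    exact c.2
  · rw [nonsing_inv_eq_ringInverse, Ring.inverse_non_unit _ hu]
    exact zero_mem S

lemma PosDef.eq_zero_of_trace_mul_mul_conjTranspose_eq_zero [RCLike 𝕜] {ρ D : Matrix n n 𝕜}
    (hρ : ρ.PosDef) (h : (ρ * D * Dᴴ).trace = 0) : D = 0 := by
  open scoped MatrixOrder in
  obtain ⟨y, hy, rfl⟩ := CStarAlgebra.isStrictlyPositive_iff_eq_star_mul_self.mp
    hρ.isStrictlyPositive
  have hyD : y * D = 0 := by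
    rw [← trace_mul_conjTranspose_self_eq_zero_iff, ← h, star_eq_conjTranspose,
      conjTranspose_mul, mul_assoc, mul_assoc, mul_assoc, trace_mul_comm yᴴ]
    simp only [mul_assoc]
  exact hy.mul_right_eq_zero.mp hyD

lemma PosDef.eq_of_forall_trace_mul_eq [RCLike 𝕜] {ρ : Matrix n n 𝕜} (hρ : ρ.PosDef)
    {S : StarSubalgebra 𝕜 (Matrix n n 𝕜)} {A B : Matrix n n 𝕜} (hA : A ∈ S) (hB : B ∈ S)
    (h : ∀ W ∈ S, (ρ * A * W).trace = (ρ * B * W).trace) : A = B := by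
  have hD : (A - B)ᴴ ∈ S := star_mem (sub_mem hA hB)
  refine sub_eq_zero.mp (hρ.eq_zero_of_trace_mul_mul_conjTranspose_eq_zero ?_)
  rw [mul_sub, sub_mul, trace_sub, h _ hD, sub_self]

lemma trace_conj_mul_eq_trace_condExp_mul [CommRing 𝕜] [StarRing 𝕜]
    {ρ U F : Matrix n n 𝕜} {Z : StarSubalgebra 𝕜 (Matrix n n 𝕜)}
    {CE : Matrix n n 𝕜 → Matrix n n 𝕜} (hF : ∀ W ∈ Z, Commute W F)
    (hrep : ∀ X : Matrix n n 𝕜, (∀ W ∈ Z, Commute W X) →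
      (ρ * (Uᴴ * X * U)).trace = (ρ * (Fᴴ * X * F)).trace)
    (hCE : ∀ A, ∀ W ∈ Z, (ρ * CE A * W).trace = (ρ * A * W).trace)
    {X W : Matrix n n 𝕜} (hX : ∀ V ∈ Z, Commute V X) (hW : W ∈ Z)
    (hWcomm : ∀ V ∈ Z, Commute V W) :
    (ρ * (Uᴴ * (X * W) * U)).trace = (ρ * CE (Fᴴ * X * F) * W).trace := by
  rw [hrep _ fun V hV => (hX V hV).mul_right (hWcomm V hV), hCE _ W hW]
  simp only [mul_assoc, (hF W hW).eq]

end Matrix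

theorem bouten_van_handel_general {n : ℕ}
    (ρ : Matrix (Fin n) (Fin n) ℂ) (hρ : ρ.PosDef)
    (U : Matrix (Fin n) (Fin n) ℂ) (hU : U ∈ Matrix.unitaryGroup (Fin n) ℂ)
    (Z : StarSubalgebra ℂ (Matrix (Fin n) (Fin n) ℂ))
    (hZcomm : ∀ W₁ ∈ Z, ∀ W₂ ∈ Z, W₁ * W₂ = W₂ * W₁)
    (F : Matrix (Fin n) (Fin n) ℂ)
    (hF : ∀ W ∈ Z, Commute W F)
    (hrep : ∀ X : Matrix (Fin n) (Fin n) ℂ, (∀ W ∈ Z, Commute W X) →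
      (ρ * (Uᴴ * X * U)).trace = (ρ * (Fᴴ * X * F)).trace)
    -- `CE` : conditional expectation onto `Z` w.r.t. `ρ`
    (CE : Matrix (Fin n) (Fin n) ℂ → Matrix (Fin n) (Fin n) ℂ)
    (hCEmem : ∀ A, CE A ∈ Z)
    (hCE : ∀ A, ∀ W ∈ Z, (ρ * CE A * W).trace = (ρ * A * W).trace)
    -- `CEY` : conditional expectation onto `Y = U*ZU` w.r.t. `ρ`
    (CEY : Matrix (Fin n) (Fin n) ℂ → Matrix (Fin n) (Fin n) ℂ)
    (hCEYmem : ∀ A, ∃ W ∈ Z, CEY A = Uᴴ * W * U)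
    (hCEY : ∀ A, ∀ W ∈ Z,
      (ρ * CEY A * (Uᴴ * W * U)).trace = (ρ * A * (Uᴴ * W * U)).trace)
    -- the unnormalized conditional expectation `σ`
    (σ : Matrix (Fin n) (Fin n) ℂ → Matrix (Fin n) (Fin n) ℂ)
    (hσ : ∀ X, σ X = Uᴴ * CE (Fᴴ * X * F) * U)
    (hinv : IsUnit (σ 1)) :
    ∀ X : Matrix (Fin n) (Fin n) ℂ, (∀ W ∈ Z, Commute W X) →
      CEY (Uᴴ * X * U) = (σ 1)⁻¹ * σ X := by
  intro X hX
  let φ := Unitary.conjStarAlgAut ℂ _ (star (⟨U, hU⟩ : unitary (Matrix (Fin n) (Fin n) ℂ)))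
  have hφ : ∀ A, φ A = Uᴴ * A * U := fun A => Unitary.conjStarAlgAut_star_apply _ A
  have hZ' : ∀ W ∈ Z, ∀ V ∈ Z, Commute V W := fun W hW V hV => hZcomm V hV W hW
  have hpair {X W} := trace_conj_mul_eq_trace_condExp_mul hF hrep hCE (X := X) (W := W)
  set K := CE (Fᴴ * 1 * F)
  set G := CE (Fᴴ * X * F)
  have hK : IsUnit K.det := by
    rwa [hσ, ← hφ, isUnit_map_iff, isUnit_iff_isUnit_det] at hinv
  have hKinv : K⁻¹ ∈ Z := inv_mem_subalgebra Z.toSubalgebra (hCEmem _)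
  have hσ1inv : (σ 1)⁻¹ = φ K⁻¹ := by
    rw [hσ, ← hφ]
    exact inv_eq_left_inv (by rw [← map_mul, nonsing_inv_mul K hK, map_one])
  rw [hσ1inv, hσ X, ← hφ G, ← map_mul]
  refine hρ.eq_of_forall_trace_mul_eq (S := Z.map (φ : _ →⋆ₐ[ℂ] _)) ?_ ?_ ?_
  · obtain ⟨W, hW, hCEYW⟩ := hCEYmem (Uᴴ * X * U)
    exact StarSubalgebra.mem_map.mpr ⟨W, hW, (hφ W).trans hCEYW.symm⟩
  · exact StarSubalgebra.mem_map.mpr ⟨_, mul_mem hKinv (hCEmem _), rfl⟩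
  · rintro _ ⟨W, hW, rfl⟩
    have hKGW : K⁻¹ * G * W ∈ Z := mul_mem (mul_mem hKinv (hCEmem _)) hW
    calc (ρ * CEY (Uᴴ * X * U) * φ W).trace
        = (ρ * (Uᴴ * X * U) * (Uᴴ * W * U)).trace := by rw [hφ, hCEY _ W hW]
      _ = (ρ * G * W).trace := by
        rw [mul_assoc ρ (Uᴴ * X * U), ← hφ, ← hφ, ← map_mul, hφ, hpair hX hW (hZ' W hW)]
      _ = (ρ * K * (K⁻¹ * G * W)).trace := by
        rw [mul_assoc ρ K, ← mul_assoc K, ← mul_assoc K, mul_nonsing_inv K hK, one_mul,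
          mul_assoc]
      _ = (ρ * (Uᴴ * (1 * (K⁻¹ * G * W)) * U)).trace :=
        (hpair (fun V _ => Commute.one_right V) hKGW (hZ' _ hKGW)).symm
      _ = (ρ * φ (K⁻¹ * G) * φ W).trace := by
        rw [one_mul, ← hφ]
        simp only [map_mul, mul_assoc]

/-- (Bouten–van Handel reference probability theorem, finite-dimensional
version.) Let `tr(ρ ·)` be a faithful state, `Z` a commutative *-subalgebra,
`U` a unitary and `Y = U*ZU`. Suppose `F` lies in the commutant of `Z` and
`tr(ρ U*XU) = tr(ρ F*XF)` for all `X` in the commutant. Then, with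
`σ(X) = U* E[F*XF|Z] U`, for every `X` in the commutant with `σ(I)` invertible,
`E[U*XU | Y] = σ(I)⁻¹ σ(X)`. -/
theorem bouten_van_handel {n : ℕ}
    (ρ : Matrix (Fin n) (Fin n) ℂ) (hρ : ρ.PosDef) (hρtr : ρ.trace = 1)
    (U : Matrix (Fin n) (Fin n) ℂ) (hU : U ∈ Matrix.unitaryGroup (Fin n) ℂ)
    (Z : StarSubalgebra ℂ (Matrix (Fin n) (Fin n) ℂ))
    (hZcomm : ∀ W₁ ∈ Z, ∀ W₂ ∈ Z, W₁ * W₂ = W₂ * W₁)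
    (F : Matrix (Fin n) (Fin n) ℂ)
    (hF : ∀ W ∈ Z, Commute W F)
    (hrep : ∀ X : Matrix (Fin n) (Fin n) ℂ, (∀ W ∈ Z, Commute W X) →
      (ρ * (Uᴴ * X * U)).trace = (ρ * (Fᴴ * X * F)).trace)
    -- `CE` : conditional expectation onto `Z` w.r.t. `ρ`
    (CE : Matrix (Fin n) (Fin n) ℂ → Matrix (Fin n) (Fin n) ℂ)
    (hCEmem : ∀ A, CE A ∈ Z)
    (hCE : ∀ A, ∀ W ∈ Z, (ρ * CE A * W).trace = (ρ * A * W).trace)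
    -- `CEY` : conditional expectation onto `Y = U*ZU` w.r.t. `ρ`
    (CEY : Matrix (Fin n) (Fin n) ℂ → Matrix (Fin n) (Fin n) ℂ)
    (hCEYmem : ∀ A, ∃ W ∈ Z, CEY A = Uᴴ * W * U)
    (hCEY : ∀ A, ∀ W ∈ Z,
      (ρ * CEY A * (Uᴴ * W * U)).trace = (ρ * A * (Uᴴ * W * U)).trace)
    -- the unnormalized conditional expectation `σ`
    (σ : Matrix (Fin n) (Fin n) ℂ → Matrix (Fin n) (Fin n) ℂ)
    (hσ : ∀ X, σ X = Uᴴ * CE (Fᴴ * X * F) * U)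
    (hinv : IsUnit (σ 1)) :
    ∀ X : Matrix (Fin n) (Fin n) ℂ, (∀ W ∈ Z, Commute W X) →
      CEY (Uᴴ * X * U) = (σ 1)⁻¹ * σ X :=
  bouten_van_handel_general ρ hρ U hU Z hZcomm F hF hrep CE hCEmem hCE CEY hCEYmem hCEY σ hσ hinv
end

section
/- (Probe observable compatibility.) In the intervention model, the probe observable M̃(τ) = Ũ(τ,0)* (I ⊗ I ⊗ M) Ũ(τ,0) commutes with every output quadrature Ỹ_k(t) for all times t in [0,T], both before and after τ. -/
open Matrix Kronecker BigOperators

/-!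
Both observables are Heisenberg-picture conjugates of operators acting on different tensor factors:
`M̃(τ)` conjugates `I ⊗ I ⊗ M` by `Ũ(τ,0) = V (U(τ,0) ⊗ I)`, and `Ỹ_k(t)` conjugates
`(I ⊗ Z_k(t)) ⊗ I` by `Ũ(t,0)`. Conjugating both by the unitary `U(τ,0) ⊗ I` reduces the claim to
a commutation relation between `V* (I ⊗ I ⊗ M) V` and a conjugate of the field quadrature.
Before `τ`, the flow property gives `U(t,0) = U(τ,t)* U(τ,0)`, and `U(τ,t)` commutes with
`I ⊗ Z_k(t)`, so the quadrature is simply `(I ⊗ Z_k(t)) ⊗ I`, which commutes with `V`.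
After `τ`, the extra factor `U(t,τ) ⊗ I` does not touch the probe, so the quadrature's
conjugate by it still commutes with `I ⊗ I ⊗ M`.
-/

section StarMonoid

variable {R : Type*} [Monoid R] [StarMul R]

theorem Commute.star_left_of_mem_unitary {u a : R} (hu : u ∈ unitary R) (h : Commute u a) :
    Commute (star u) a := by
  refine (commute_unitary_iff_star_right_conjugate (Unitary.star_mem hu)).2 ?_
  rw [_root_.star_star, (commute_unitary_iff_star_left_conjugate hu).1 h]

theorem Commute.star_conj_of_mem_unitary {u a b : R} (hu : u ∈ unitary R) (h : Commute a b) :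
    Commute (star u * a * u) (star u * b * u) := by
  have conj_mul : ∀ x y : R, star u * x * u * (star u * y * u) = star u * (x * y) * u := by
    intro x y
    calc star u * x * u * (star u * y * u) = star u * x * (u * star u) * y * u := by
          simp only [mul_assoc]
      _ = star u * (x * y) * u := by
          rw [Unitary.mul_star_self_of_mem hu, mul_one, mul_assoc (star u) x y]
  rw [Commute, SemiconjBy, conj_mul, conj_mul, h.eq]

-- In the model: `v = V`, `p = U(τ,0) ⊗ I`, `n = I ⊗ I ⊗ M`, `w = (I ⊗ Z_k(t)) ⊗ I`, and
-- `q = U(τ,t) ⊗ I` before, `q = U(t,τ) ⊗ I` after the intervention.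
variable {v p q n w : R}

theorem commute_star_conj_before_intervention (hv : v ∈ unitary R) (hp : p ∈ unitary R)
    (hq : q ∈ unitary R) (hqw : Commute q w) (hvw : Commute v w) (hnw : Commute n w) :
    Commute (star (v * p) * n * (v * p)) (star (star q * p) * w * (star q * p)) := by
  have hw : star (star q * p) * w * (star q * p) = star p * w * p := by
    calc star (star q * p) * w * (star q * p) = star p * (q * w * star q) * p := by
          simp only [star_mul, star_star, mul_assoc]
      _ = star p * w * p := by rw [(commute_unitary_iff_star_right_conjugate hq).1 hqw]
  have hvnv : Commute (star v * n * v) w :=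
    ((hvw.star_left_of_mem_unitary hv).mul_left hnw).mul_left hvw
  rw [hw, star_mul]
  simpa only [mul_assoc] using hvnv.star_conj_of_mem_unitary hp

theorem commute_star_conj_after_intervention (hv : v ∈ unitary R) (hp : p ∈ unitary R)
    (hq : q ∈ unitary R) (hqn : Commute q n) (hwn : Commute w n) :
    Commute (star (v * p) * n * (v * p)) (star (q * v * p) * w * (q * v * p)) := by
  have hnw : Commute n (star q * w * q) :=
    ((hqn.star_left_of_mem_unitary hq).mul_left hwn).mul_left hqn |>.symm
  have := (hnw.star_conj_of_mem_unitary hv).star_conj_of_mem_unitary hp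
  simpa only [star_mul, mul_assoc] using this

end StarMonoid

theorem Commute.kronecker {α l m : Type*} [CommSemiring α] [Fintype l] [Fintype m]
    {A B : Matrix l l α} {C D : Matrix m m α} (hAB : Commute A B) (hCD : Commute C D) :
    Commute (A ⊗ₖ C) (B ⊗ₖ D) := by
  rw [Commute, SemiconjBy, ← mul_kronecker_mul, ← mul_kronecker_mul, hAB.eq, hCD.eq]

theorem probe_observable_compatible_general {n f p T : ℕ} {K : Type*}
    (τ : ℕ) (hτT : τ ≤ T)
    (U : ℕ → ℕ → Matrix (Fin n × Fin f) (Fin n × Fin f) ℂ)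
    (hUuni : ∀ s t, s ≤ t → t ≤ T → U t s ∈ Matrix.unitaryGroup (Fin n × Fin f) ℂ)
    (hUid : ∀ t, U t t = 1)
    (hflow : ∀ t₁ t₂ t₃, t₁ ≤ t₂ → t₂ ≤ t₃ → t₃ ≤ T →
      U t₃ t₂ * U t₂ t₁ = U t₃ t₁)
    (V : Matrix ((Fin n × Fin f) × Fin p) ((Fin n × Fin f) × Fin p) ℂ)
    (hVuni : V ∈ Matrix.unitaryGroup ((Fin n × Fin f) × Fin p) ℂ)
    (Ut : ℕ → ℕ → Matrix ((Fin n × Fin f) × Fin p) ((Fin n × Fin f) × Fin p) ℂ)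
    (hUt1 : ∀ t, t < τ →
      Ut t 0 = U t 0 ⊗ₖ (1 : Matrix (Fin p) (Fin p) ℂ))
    (hUt2 : ∀ t, τ ≤ t →
      Ut t 0 = (U t τ ⊗ₖ (1 : Matrix (Fin p) (Fin p) ℂ)) * V *
        (U τ 0 ⊗ₖ (1 : Matrix (Fin p) (Fin p) ℂ)))
    (Z : K → ℕ → Matrix (Fin f) (Fin f) ℂ)
    (hUZ : ∀ k u s t, u ≤ s → s ≤ t → t ≤ T →
      Commute (U t s) ((1 : Matrix (Fin n) (Fin n) ℂ) ⊗ₖ Z k u))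
    (hVZ : ∀ k u, Commute V (((1 : Matrix (Fin n) (Fin n) ℂ) ⊗ₖ Z k u) ⊗ₖ
      (1 : Matrix (Fin p) (Fin p) ℂ)))
    (Yt : K → ℕ → Matrix ((Fin n × Fin f) × Fin p) ((Fin n × Fin f) × Fin p) ℂ)
    (hYt : ∀ k t, Yt k t = (Ut t 0)ᴴ *
      (((1 : Matrix (Fin n) (Fin n) ℂ) ⊗ₖ Z k t) ⊗ₖ
        (1 : Matrix (Fin p) (Fin p) ℂ)) * Ut t 0)
    (M : Matrix (Fin p) (Fin p) ℂ)
    (Mt : Matrix ((Fin n × Fin f) × Fin p) ((Fin n × Fin f) × Fin p) ℂ)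
    (hMt : Mt = (Ut τ 0)ᴴ *
      ((1 : Matrix (Fin n × Fin f) (Fin n × Fin f) ℂ) ⊗ₖ M) * Ut τ 0) :
    ∀ k t, t ≤ T → Commute Mt (Yt k t) := by
  intro k t htT
  have kron_one_mem_unitary : ∀ {s r}, s ≤ r → r ≤ T →
      U r s ⊗ₖ (1 : Matrix (Fin p) (Fin p) ℂ) ∈ unitary _ :=
    fun hsr hrT => kronecker_mem_unitary (hUuni _ _ hsr hrT) (one_mem _)
  have hP := kron_one_mem_unitary τ.zero_le hτT
  have hWN : Commute (((1 : Matrix (Fin n) (Fin n) ℂ) ⊗ₖ Z k t) ⊗ₖ 1) (1 ⊗ₖ M) :=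
    (Commute.one_right _).kronecker (Commute.one_left M)
  have hUtτ : Ut τ 0 = V * (U τ 0 ⊗ₖ 1) := by
    rw [hUt2 τ le_rfl, hUid, one_kronecker_one, one_mul]
  rw [hMt, hYt, hUtτ, ← star_eq_conjTranspose, ← star_eq_conjTranspose]
  rcases lt_or_ge t τ with htτ | hτt
  · have hQ := kron_one_mem_unitary htτ.le hτT
    have hUt0 : U t 0 ⊗ₖ (1 : Matrix (Fin p) (Fin p) ℂ) =
        star (U τ t ⊗ₖ 1) * (U τ 0 ⊗ₖ 1) := by
      rw [star_eq_conjTranspose, conjTranspose_kronecker, conjTranspose_one, ← mul_kronecker_mul,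
        one_mul, ← star_eq_conjTranspose, ← hflow 0 t τ t.zero_le htτ.le hτT, ← mul_assoc,
        Unitary.star_mul_self_of_mem (hUuni t τ htτ.le hτT), one_mul]
    rw [hUt1 t htτ, hUt0]
    exact commute_star_conj_before_intervention hVuni hP hQ
      ((hUZ k t t τ le_rfl htτ.le hτT).kronecker (Commute.refl 1)) (hVZ k t) hWN.symm
  · rw [hUt2 t hτt]
    exact commute_star_conj_after_intervention hVuni hP (kron_one_mem_unitary hτt htT)
      ((Commute.one_right _).kronecker (Commute.one_left M)) hWN

/-- (Probe observable compatibility.) In the intervention model the probe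
observable `M̃(τ) = Ũ(τ,0)* (I ⊗ I ⊗ M) Ũ(τ,0)` commutes with every output
quadrature `Ỹ_k(t)`, for all times `t ∈ [0,T]`, both before and after `τ`. -/
theorem probe_observable_compatible {n f p T : ℕ} {K : Type*} [Fintype K]
    (τ : ℕ) (hτT : τ ≤ T)
    (U : ℕ → ℕ → Matrix (Fin n × Fin f) (Fin n × Fin f) ℂ)
    (hUuni : ∀ s t, s ≤ t → t ≤ T → U t s ∈ Matrix.unitaryGroup (Fin n × Fin f) ℂ)
    (hUid : ∀ t, U t t = 1)
    (hflow : ∀ t₁ t₂ t₃, t₁ ≤ t₂ → t₂ ≤ t₃ → t₃ ≤ T →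
      U t₃ t₂ * U t₂ t₁ = U t₃ t₁)
    (V : Matrix ((Fin n × Fin f) × Fin p) ((Fin n × Fin f) × Fin p) ℂ)
    (hVuni : V ∈ Matrix.unitaryGroup ((Fin n × Fin f) × Fin p) ℂ)
    (hVF : ∀ F₀ : Matrix (Fin f) (Fin f) ℂ,
      Commute V (((1 : Matrix (Fin n) (Fin n) ℂ) ⊗ₖ F₀) ⊗ₖ
        (1 : Matrix (Fin p) (Fin p) ℂ)))
    (Ut : ℕ → ℕ → Matrix ((Fin n × Fin f) × Fin p) ((Fin n × Fin f) × Fin p) ℂ)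
    (hUt1 : ∀ t, t < τ →
      Ut t 0 = U t 0 ⊗ₖ (1 : Matrix (Fin p) (Fin p) ℂ))
    (hUt2 : ∀ t, τ ≤ t →
      Ut t 0 = (U t τ ⊗ₖ (1 : Matrix (Fin p) (Fin p) ℂ)) * V *
        (U τ 0 ⊗ₖ (1 : Matrix (Fin p) (Fin p) ℂ)))
    (hUt3 : ∀ t s, s ≤ t → Ut t s = Ut t 0 * (Ut s 0)ᴴ)
    (Z : K → ℕ → Matrix (Fin f) (Fin f) ℂ)
    (hZherm : ∀ k t, (Z k t).IsHermitian)
    (hZcomm : ∀ j k t s, Commute (Z j t) (Z k s))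
    (hUZ : ∀ k u s t, u ≤ s → s ≤ t → t ≤ T →
      Commute (U t s) ((1 : Matrix (Fin n) (Fin n) ℂ) ⊗ₖ Z k u))
    (hVZ : ∀ k u, Commute V (((1 : Matrix (Fin n) (Fin n) ℂ) ⊗ₖ Z k u) ⊗ₖ
      (1 : Matrix (Fin p) (Fin p) ℂ)))
    (Yt : K → ℕ → Matrix ((Fin n × Fin f) × Fin p) ((Fin n × Fin f) × Fin p) ℂ)
    (hYt : ∀ k t, Yt k t = (Ut t 0)ᴴ *
      (((1 : Matrix (Fin n) (Fin n) ℂ) ⊗ₖ Z k t) ⊗ₖ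
        (1 : Matrix (Fin p) (Fin p) ℂ)) * Ut t 0)
    (M : Matrix (Fin p) (Fin p) ℂ) (hM : M.IsHermitian)
    (Mt : Matrix ((Fin n × Fin f) × Fin p) ((Fin n × Fin f) × Fin p) ℂ)
    (hMt : Mt = (Ut τ 0)ᴴ *
      ((1 : Matrix (Fin n × Fin f) (Fin n × Fin f) ℂ) ⊗ₖ M) * Ut τ 0) :
    ∀ k t, t ≤ T → Commute Mt (Yt k t) :=
  probe_observable_compatible_general τ hτT U hUuni hUid hflow V hVuni Ut hUt1 hUt2 Z hUZ hVZ Yt hYt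
    M Mt hMt
end

section
/- (Non-demolition for the intervened system.) In the intervention model, j̃_t(X) = Ũ(t,0)* (X ⊗ I ⊗ I) Ũ(t,0) commutes with all quadratures Ỹ_k(u) for u ≤ t, and commutes with M̃(τ) whenever t ≥ τ. -/
open Matrix Kronecker BigOperators

set_option linter.unusedSectionVars false
set_option maxHeartbeats 1000000

section Aux
variable {l m q : Type*} [Fintype l] [Fintype m] [Fintype q]
  [DecidableEq l] [DecidableEq m] [DecidableEq q]

lemma kron_conjTranspose (A : Matrix l l ℂ) (B : Matrix m m ℂ) :
    (A ⊗ₖ B)ᴴ = Aᴴ ⊗ₖ Bᴴ := by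
  ext ⟨i,j⟩ ⟨k,r⟩
  simp [conjTranspose_apply, kroneckerMap_apply, mul_comm]

lemma kron_unitary {A : Matrix l l ℂ} {B : Matrix m m ℂ}
    (hA : A ∈ Matrix.unitaryGroup l ℂ) (hB : B ∈ Matrix.unitaryGroup m ℂ) :
    A ⊗ₖ B ∈ Matrix.unitaryGroup (l × m) ℂ := by
  rw [Matrix.mem_unitaryGroup_iff] at hA hB ⊢
  rw [Matrix.star_eq_conjTranspose] at hA hB ⊢
  rw [kron_conjTranspose, ← mul_kronecker_mul, hA, hB, one_kronecker_one]

lemma commute_kron_one {A B : Matrix l l ℂ} (h : Commute A B) :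
    Commute (A ⊗ₖ (1 : Matrix m m ℂ)) (B ⊗ₖ (1 : Matrix m m ℂ)) := by
  unfold Commute SemiconjBy
  rw [← mul_kronecker_mul, ← mul_kronecker_mul, h.eq, one_mul]

lemma commute_kron_one_one_kron (A : Matrix l l ℂ) (B : Matrix m m ℂ) :
    Commute (A ⊗ₖ (1 : Matrix m m ℂ)) ((1 : Matrix l l ℂ) ⊗ₖ B) := by
  unfold Commute SemiconjBy
  rw [← mul_kronecker_mul, ← mul_kronecker_mul, one_mul, mul_one, one_mul, mul_one]

lemma conj_commute_conj {P A B : Matrix l l ℂ} (hP : P * Pᴴ = 1)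
    (h : Commute A B) : Commute (Pᴴ * A * P) (Pᴴ * B * P) := by
  unfold Commute SemiconjBy
  calc Pᴴ * A * P * (Pᴴ * B * P) = Pᴴ * A * (P * Pᴴ) * B * P := by noncomm_ring
    _ = Pᴴ * (A * B) * P := by rw [hP]; noncomm_ring
    _ = Pᴴ * (B * A) * P := by rw [h.eq]
    _ = Pᴴ * B * (P * Pᴴ) * A * P := by rw [hP]; noncomm_ring
    _ = Pᴴ * B * P * (Pᴴ * A * P) := by noncomm_ring

lemma conj_commute_of {W A B : Matrix l l ℂ} (h1 : W * Wᴴ = 1) (h2 : Wᴴ * W = 1)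
    (hWB : Commute W B) (hAB : Commute A B) : Commute (Wᴴ * A * W) B := by
  have hWB' : Wᴴ * B = B * Wᴴ := by
    calc Wᴴ * B = Wᴴ * B * (W * Wᴴ) := by rw [h1, mul_one]
      _ = Wᴴ * (B * W) * Wᴴ := by noncomm_ring
      _ = Wᴴ * (W * B) * Wᴴ := by rw [hWB.eq]
      _ = (Wᴴ * W) * B * Wᴴ := by noncomm_ring
      _ = B * Wᴴ := by rw [h2, one_mul]
  unfold Commute SemiconjBy
  calc Wᴴ * A * W * B = Wᴴ * A * (W * B) := by noncomm_ring
    _ = Wᴴ * (A * B) * W := by rw [hWB.eq]; noncomm_ring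
    _ = Wᴴ * (B * A) * W := by rw [hAB.eq]
    _ = (Wᴴ * B) * A * W := by noncomm_ring
    _ = B * (Wᴴ * A * W) := by rw [hWB']; noncomm_ring

end Aux

/-- (Non-demolition for the intervened system.) In the intervention model,
`j̃_t(X) = Ũ(t,0)* (X ⊗ I ⊗ I) Ũ(t,0)` commutes with all quadratures
`Ỹ_k(u)` for `u ≤ t`, and commutes with `M̃(τ)` whenever `t ≥ τ`. -/
theorem intervention_nondemolition {n f p T : ℕ} {K : Type*} [Fintype K]
    (τ : ℕ) (hτT : τ ≤ T)
    (U : ℕ → ℕ → Matrix (Fin n × Fin f) (Fin n × Fin f) ℂ)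
    (hUuni : ∀ s t, s ≤ t → t ≤ T → U t s ∈ Matrix.unitaryGroup (Fin n × Fin f) ℂ)
    (hUid : ∀ t, U t t = 1)
    (hflow : ∀ t₁ t₂ t₃, t₁ ≤ t₂ → t₂ ≤ t₃ → t₃ ≤ T →
      U t₃ t₂ * U t₂ t₁ = U t₃ t₁)
    (V : Matrix ((Fin n × Fin f) × Fin p) ((Fin n × Fin f) × Fin p) ℂ)
    (hVuni : V ∈ Matrix.unitaryGroup ((Fin n × Fin f) × Fin p) ℂ)
    (hVF : ∀ F₀ : Matrix (Fin f) (Fin f) ℂ,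
      Commute V (((1 : Matrix (Fin n) (Fin n) ℂ) ⊗ₖ F₀) ⊗ₖ
        (1 : Matrix (Fin p) (Fin p) ℂ)))
    (Ut : ℕ → ℕ → Matrix ((Fin n × Fin f) × Fin p) ((Fin n × Fin f) × Fin p) ℂ)
    (hUt1 : ∀ t, t < τ →
      Ut t 0 = U t 0 ⊗ₖ (1 : Matrix (Fin p) (Fin p) ℂ))
    (hUt2 : ∀ t, τ ≤ t →
      Ut t 0 = (U t τ ⊗ₖ (1 : Matrix (Fin p) (Fin p) ℂ)) * V *
        (U τ 0 ⊗ₖ (1 : Matrix (Fin p) (Fin p) ℂ)))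
    (hUt3 : ∀ t s, s ≤ t → Ut t s = Ut t 0 * (Ut s 0)ᴴ)
    (Z : K → ℕ → Matrix (Fin f) (Fin f) ℂ)
    (hZherm : ∀ k t, (Z k t).IsHermitian)
    (hZcomm : ∀ j k t s, Commute (Z j t) (Z k s))
    (hUZ : ∀ k u s t, u ≤ s → s ≤ t → t ≤ T →
      Commute (U t s) ((1 : Matrix (Fin n) (Fin n) ℂ) ⊗ₖ Z k u))
    (hVZ : ∀ k u, Commute V (((1 : Matrix (Fin n) (Fin n) ℂ) ⊗ₖ Z k u) ⊗ₖ
      (1 : Matrix (Fin p) (Fin p) ℂ)))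
    (Yt : K → ℕ → Matrix ((Fin n × Fin f) × Fin p) ((Fin n × Fin f) × Fin p) ℂ)
    (hYt : ∀ k t, Yt k t = (Ut t 0)ᴴ *
      (((1 : Matrix (Fin n) (Fin n) ℂ) ⊗ₖ Z k t) ⊗ₖ
        (1 : Matrix (Fin p) (Fin p) ℂ)) * Ut t 0)
    (M : Matrix (Fin p) (Fin p) ℂ) (hM : M.IsHermitian)
    (Mt : Matrix ((Fin n × Fin f) × Fin p) ((Fin n × Fin f) × Fin p) ℂ)
    (hMt : Mt = (Ut τ 0)ᴴ *
      ((1 : Matrix (Fin n × Fin f) (Fin n × Fin f) ℂ) ⊗ₖ M) * Ut τ 0) :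
    ∀ (X : Matrix (Fin n) (Fin n) ℂ) (t : ℕ), t ≤ T →
      ((∀ k u, u ≤ t → Commute
          ((Ut t 0)ᴴ * ((X ⊗ₖ (1 : Matrix (Fin f) (Fin f) ℂ)) ⊗ₖ
            (1 : Matrix (Fin p) (Fin p) ℂ)) * Ut t 0) (Yt k u)) ∧
        (τ ≤ t → Commute
          ((Ut t 0)ᴴ * ((X ⊗ₖ (1 : Matrix (Fin f) (Fin f) ℂ)) ⊗ₖ
            (1 : Matrix (Fin p) (Fin p) ℂ)) * Ut t 0) Mt)) := by

  -- basic unitarity facts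
  have hU1 : ∀ s a, a ≤ s → s ≤ T → U s a * (U s a)ᴴ = 1 := by
    intro s a has hsT
    have := (Matrix.mem_unitaryGroup_iff).mp (hUuni a s has hsT)
    rwa [Matrix.star_eq_conjTranspose] at this
  have hV1 : V * Vᴴ = 1 := by
    have := (Matrix.mem_unitaryGroup_iff).mp hVuni
    rwa [Matrix.star_eq_conjTranspose] at this
  have hUflow : ∀ a u s, a ≤ u → u ≤ s → s ≤ T → U s a * (U u a)ᴴ = U s u := by
    intro a u s hau hus hsT
    have h := hflow a u s hau hus hsT
    calc U s a * (U u a)ᴴ = (U s u * U u a) * (U u a)ᴴ := by rw [h]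
      _ = U s u * (U u a * (U u a)ᴴ) := by noncomm_ring
      _ = U s u := by rw [hU1 u a hau (hus.trans hsT), mul_one]
  have hUtuni : ∀ s, s ≤ T → Ut s 0 ∈ Matrix.unitaryGroup ((Fin n × Fin f) × Fin p) ℂ := by
    intro s hsT
    rcases lt_or_ge s τ with hs | hs
    · rw [hUt1 s hs]
      exact kron_unitary (hUuni 0 s (Nat.zero_le s) hsT)
        (Submonoid.one_mem _)
    · rw [hUt2 s hs]
      exact Submonoid.mul_mem _ (Submonoid.mul_mem _
        (kron_unitary (hUuni τ s hs hsT) (Submonoid.one_mem _)) hVuni)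
        (kron_unitary (hUuni 0 τ (Nat.zero_le τ) hτT) (Submonoid.one_mem _))
  have huni1 : ∀ s, s ≤ T → Ut s 0 * (Ut s 0)ᴴ = 1 := by
    intro s hsT
    have := (Matrix.mem_unitaryGroup_iff).mp (hUtuni s hsT)
    rwa [Matrix.star_eq_conjTranspose] at this
  have huni2 : ∀ s, s ≤ T → (Ut s 0)ᴴ * Ut s 0 = 1 := by
    intro s hsT
    have := (Matrix.mem_unitaryGroup_iff').mp (hUtuni s hsT)
    rwa [Matrix.star_eq_conjTranspose] at this
  intro X t htT
  set A : Matrix ((Fin n × Fin f) × Fin p) ((Fin n × Fin f) × Fin p) ℂ :=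
    (X ⊗ₖ (1 : Matrix (Fin f) (Fin f) ℂ)) ⊗ₖ (1 : Matrix (Fin p) (Fin p) ℂ) with hA
  -- reduction to commutation with the relative propagator
  have reduce : ∀ (u : ℕ), u ≤ t →
      ∀ B : Matrix ((Fin n × Fin f) × Fin p) ((Fin n × Fin f) × Fin p) ℂ,
      Commute (Ut t 0 * (Ut u 0)ᴴ) B → Commute A B →
      Commute ((Ut t 0)ᴴ * A * Ut t 0) ((Ut u 0)ᴴ * B * Ut u 0) := by
    intro u hut B hWB hAB
    have huT : u ≤ T := hut.trans htT
    set W := Ut t 0 * (Ut u 0)ᴴ with hW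
    have hWW1 : W * Wᴴ = 1 := by
      rw [hW, conjTranspose_mul, conjTranspose_conjTranspose]
      calc Ut t 0 * (Ut u 0)ᴴ * (Ut u 0 * (Ut t 0)ᴴ)
          = Ut t 0 * ((Ut u 0)ᴴ * Ut u 0) * (Ut t 0)ᴴ := by noncomm_ring
        _ = 1 := by rw [huni2 u huT, mul_one, huni1 t htT]
    have hWW2 : Wᴴ * W = 1 := by
      rw [hW, conjTranspose_mul, conjTranspose_conjTranspose]
      calc Ut u 0 * (Ut t 0)ᴴ * (Ut t 0 * (Ut u 0)ᴴ)
          = Ut u 0 * ((Ut t 0)ᴴ * Ut t 0) * (Ut u 0)ᴴ := by noncomm_ring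
        _ = 1 := by rw [huni2 t htT, mul_one, huni1 u huT]
    have hsplit : Ut t 0 = W * Ut u 0 := by
      rw [hW]
      calc Ut t 0 = Ut t 0 * ((Ut u 0)ᴴ * Ut u 0) := by rw [huni2 u huT, mul_one]
        _ = Ut t 0 * (Ut u 0)ᴴ * Ut u 0 := by noncomm_ring
    have : (Ut t 0)ᴴ * A * Ut t 0 = (Ut u 0)ᴴ * (Wᴴ * A * W) * Ut u 0 := by
      rw [hsplit, conjTranspose_mul]; noncomm_ring
    rw [this]
    exact conj_commute_conj (huni1 u huT) (conj_commute_of hWW1 hWW2 hWB hAB)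
  -- the relative propagator in the post-intervention regime
  have hWform : ∀ u, τ ≤ u → u ≤ t →
      Ut t 0 * (Ut u 0)ᴴ = U t u ⊗ₖ (1 : Matrix (Fin p) (Fin p) ℂ) := by
    intro u hτu hut
    have e1 : (U τ 0 ⊗ₖ (1 : Matrix (Fin p) (Fin p) ℂ)) *
        (U τ 0 ⊗ₖ (1 : Matrix (Fin p) (Fin p) ℂ))ᴴ = 1 := by
      rw [kron_conjTranspose, ← mul_kronecker_mul, hU1 τ 0 (Nat.zero_le τ) hτT,
        conjTranspose_one, mul_one, one_kronecker_one]
    calc Ut t 0 * (Ut u 0)ᴴ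
        = U t τ ⊗ₖ (1 : Matrix (Fin p) (Fin p) ℂ) * V *
            ((U τ 0 ⊗ₖ (1 : Matrix (Fin p) (Fin p) ℂ)) *
              (U τ 0 ⊗ₖ (1 : Matrix (Fin p) (Fin p) ℂ))ᴴ) *
            (Vᴴ * (U u τ ⊗ₖ (1 : Matrix (Fin p) (Fin p) ℂ))ᴴ) := by
          rw [hUt2 t (hτu.trans hut), hUt2 u hτu, conjTranspose_mul, conjTranspose_mul]
          noncomm_ring
      _ = U t τ ⊗ₖ (1 : Matrix (Fin p) (Fin p) ℂ) * (V * Vᴴ) *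
            (U u τ ⊗ₖ (1 : Matrix (Fin p) (Fin p) ℂ))ᴴ := by rw [e1]; noncomm_ring
      _ = U t τ ⊗ₖ (1 : Matrix (Fin p) (Fin p) ℂ) *
            ((U u τ)ᴴ ⊗ₖ (1 : Matrix (Fin p) (Fin p) ℂ)) := by
          rw [hV1, mul_one, kron_conjTranspose, conjTranspose_one]
      _ = U t u ⊗ₖ (1 : Matrix (Fin p) (Fin p) ℂ) := by
          rw [← mul_kronecker_mul, hUflow τ u t hτu hut htT, mul_one]
  constructor
  · -- quadratures
    intro k u hut
    rw [hYt]
    apply reduce u hut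
    · -- the relative propagator commutes with (1 ⊗ Z k u) ⊗ 1
      rcases lt_or_ge t τ with htτ | hτt
      · have huτ : u < τ := lt_of_le_of_lt hut htτ
        have : Ut t 0 * (Ut u 0)ᴴ = U t u ⊗ₖ (1 : Matrix (Fin p) (Fin p) ℂ) := by
          rw [hUt1 t htτ, hUt1 u huτ, kron_conjTranspose, conjTranspose_one,
            ← mul_kronecker_mul, mul_one, hUflow 0 u t (Nat.zero_le u) hut htT]
        rw [this]
        exact commute_kron_one (hUZ k u u t le_rfl hut htT)
      · rcases lt_or_ge u τ with huτ | hτu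
        · have : Ut t 0 * (Ut u 0)ᴴ =
              U t τ ⊗ₖ (1 : Matrix (Fin p) (Fin p) ℂ) * V *
                (U τ u ⊗ₖ (1 : Matrix (Fin p) (Fin p) ℂ)) := by
            rw [hUt2 t hτt, hUt1 u huτ, kron_conjTranspose, conjTranspose_one,
              mul_assoc (U t τ ⊗ₖ (1 : Matrix (Fin p) (Fin p) ℂ) * V),
              ← mul_kronecker_mul, mul_one, hUflow 0 u τ (Nat.zero_le u) huτ.le hτT]
          rw [this]
          exact ((commute_kron_one (hUZ k u τ t huτ.le hτt htT)).mul_left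
            (hVZ k u)).mul_left
            (commute_kron_one (hUZ k u u τ le_rfl huτ.le hτT))
        · rw [hWform u hτu hut]
          exact commute_kron_one (hUZ k u u t le_rfl hut htT)
    · exact commute_kron_one (commute_kron_one_one_kron X (Z k u))
  · -- the intervention measurement
    intro hτt
    rw [hMt]
    apply reduce τ hτt
    · rw [hWform τ le_rfl hτt]
      exact commute_kron_one_one_kron _ M
    · exact commute_kron_one_one_kron _ M
end
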